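/- Let n ≥ 3 be odd, k ≥ 1, E ⊆ ℤ_n^d. For y¹,...,y^k ∈ E and t₁,...,t_k ∈ ℤ_n, let ν(t₁,...,t_k) = |{x ∈ E : ‖x − yⁱ‖ = t_i for all i}|. Then ∑_{y¹,...,y^k ∈ E} ∑_{t₁,...,t_k ∈ ℤ_n} ν² ≪ |E|^{k+2}/n^k + τ(n)·n^{2d−1}·|E|^k / γ(n)^{d−1}, where the implied constant depends only on k. -/

import Mathlib

open Finset

noncomputable def chi (n : ℕ) (t : ZMod n) : ℂ :=
  Complex.exp (2 * Real.pi * Complex.I * (t.val : ℂ) / (n : ℂ))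

def dot {n d : ℕ} (x y : Fin d → ZMod n) : ZMod n := ∑ i, x i * y i

def nrm {n d : ℕ} (z : Fin d → ZMod n) : ZMod n := ∑ i, z i ^ 2

noncomputable def ft (n d : ℕ) [NeZero n] (f : (Fin d → ZMod n) → ℂ)
    (m : Fin d → ZMod n) : ℂ :=
  (n : ℂ)⁻¹ ^ d * ∑ x : Fin d → ZMod n, f x * chi n (-(dot x m))

set_option linter.unusedSectionVars false

noncomputable def Complex.abs : AbsoluteValue ℂ ℝ where
  toFun x := ‖x‖
  map_mul' := norm_mul
  nonneg' := norm_nonneg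
  eq_zero' _ := norm_eq_zero
  add_le' := norm_add_le

lemma Complex.abs_exp_ofReal_mul_I (x : ℝ) : Complex.abs (Complex.exp (x * Complex.I)) = 1 :=
  Complex.norm_exp_ofReal_mul_I x

lemma Complex.sq_abs (z : ℂ) : Complex.abs z ^ 2 = Complex.normSq z := Complex.sq_norm z

lemma Complex.abs_ofReal (r : ℝ) : Complex.abs (r : ℂ) = |r| := Complex.norm_real r

lemma Complex.abs_natCast (m : ℕ) : Complex.abs (m : ℂ) = m := Complex.norm_natCast m

lemma Complex.re_le_abs (z : ℂ) : z.re ≤ Complex.abs z := Complex.re_le_norm z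

noncomputable def Bf {n d : ℕ} (E : Finset (Fin d → ZMod n)) (m : Fin d → ZMod n) : ℂ :=
  ∑ y ∈ E, chi n (dot m y)

section main
variable {n : ℕ} [NeZero n]


lemma self_eq_val_cast (a : ZMod n) : a = ((a.val : ℕ) : ZMod n) := by
  rw [ZMod.natCast_val, ZMod.cast_id]

lemma chi_natCast (v : ℕ) :
    chi n ((v : ZMod n)) = Complex.exp (2 * Real.pi * Complex.I * (v : ℂ) / (n : ℂ)) := by
  have hn : (n:ℂ) ≠ 0 := by exact_mod_cast (NeZero.ne n)
  have hval : ((v : ZMod n)).val = v % n := ZMod.val_natCast n v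
  rw [chi, hval]
  obtain ⟨q, hq⟩ : ∃ q, v = n * q + v % n := ⟨v / n, by rw [Nat.div_add_mod]⟩
  have hv : (v:ℂ) = (n:ℂ) * (q:ℂ) + ((v % n : ℕ):ℂ) := by exact_mod_cast congrArg (Nat.cast : ℕ → ℂ) hq
  rw [show 2 * (Real.pi:ℂ) * Complex.I * ((v:ℂ)) / n
      = (q:ℤ) * (2 * (Real.pi:ℂ) * Complex.I) + 2 * (Real.pi:ℂ) * Complex.I * ((v % n : ℕ):ℂ) / n by
    rw [hv]; field_simp; push_cast; ring]
  rw [Complex.exp_add, Complex.exp_int_mul_two_pi_mul_I, one_mul]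

lemma chi_add (a b : ZMod n) : chi n (a + b) = chi n a * chi n b := by
  rw [self_eq_val_cast a, self_eq_val_cast b, ← Nat.cast_add, chi_natCast, chi_natCast,
    chi_natCast, ← Complex.exp_add]
  congr 1
  push_cast
  ring

@[simp] lemma chi_zero : chi n 0 = 1 := by
  simp [chi]

lemma chi_eq_one_iff {t : ZMod n} : chi n t = 1 ↔ t = 0 := by
  constructor
  · intro h
    rw [chi, Complex.exp_eq_one_iff] at h
    obtain ⟨m, hm⟩ := h
    have hn : (n:ℂ) ≠ 0 := by exact_mod_cast (NeZero.ne n)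
    have h2pi : (2 * (Real.pi:ℂ) * Complex.I) ≠ 0 := by
      apply mul_ne_zero (mul_ne_zero two_ne_zero _) Complex.I_ne_zero
      exact_mod_cast Real.pi_ne_zero
    rw [div_eq_iff hn] at hm
    have key : (2 * (Real.pi:ℂ) * Complex.I) * (t.val:ℂ)
        = (2 * (Real.pi:ℂ) * Complex.I) * ((m:ℂ) * n) := by linear_combination hm
    have hvc : (t.val : ℂ) = (m:ℂ) * n := mul_left_cancel₀ h2pi key
    have hvz : (t.val : ℤ) = m * n := by exact_mod_cast hvc
    have hdvd : (n:ℤ) ∣ (t.val : ℤ) := ⟨m, by linarith⟩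
    have hdvd' : n ∣ t.val := by exact_mod_cast hdvd
    have hv0 : t.val = 0 := Nat.eq_zero_of_dvd_of_lt hdvd' (ZMod.val_lt t) |>.symm ▸ rfl
    rw [self_eq_val_cast t, hv0]; simp
  · rintro rfl; simp

lemma chi_ne_zero (t : ZMod n) : chi n t ≠ 0 := Complex.exp_ne_zero _

lemma abs_chi (t : ZMod n) : Complex.abs (chi n t) = 1 := by
  rw [chi]
  rw [show 2 * (Real.pi:ℂ) * Complex.I * (t.val:ℂ) / n = ((2 * Real.pi * t.val / n : ℝ)) * Complex.I by
    push_cast; field_simp]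
  exact Complex.abs_exp_ofReal_mul_I _

lemma chi_neg (t : ZMod n) : chi n (-t) = (starRingEnd ℂ) (chi n t) := by
  have h1 : chi n t * chi n (-t) = 1 := by rw [← chi_add]; simp
  have h2 : chi n t * (starRingEnd ℂ) (chi n t) = 1 := by
    rw [Complex.mul_conj]
    norm_cast
    rw [← Complex.sq_abs, abs_chi]; norm_num
  exact mul_left_cancel₀ (chi_ne_zero t) (h1.trans h2.symm)



lemma sum_chi_mul (c : ZMod n) :
    ∑ s : ZMod n, chi n (s * c) = if c = 0 then (n:ℂ) else 0 := by
  by_cases hc : c = 0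
  · simp [hc, chi_zero, Finset.card_univ]
  · simp only [hc, if_false]
    set S := ∑ s : ZMod n, chi n (s * c) with hS
    have h : chi n c * S = S := by
      rw [hS, Finset.mul_sum]
      calc ∑ s : ZMod n, chi n c * chi n (s * c)
          = ∑ s : ZMod n, chi n ((s + 1) * c) := by
            refine Finset.sum_congr rfl fun s _ => ?_
            rw [← chi_add]; congr 1; ring
        _ = ∑ s : ZMod n, chi n (s * c) :=
            Fintype.sum_equiv (Equiv.addRight (1 : ZMod n)) _ _ (fun s => rfl)
    have h2 : (chi n c - 1) * S = 0 := by rw [sub_mul, one_mul, h, sub_self]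
    rcases mul_eq_zero.mp h2 with h3 | h3
    · exact absurd (by linear_combination h3 : chi n c = 1) (fun h4 => hc (chi_eq_one_iff.mp h4))
    · exact h3

lemma sum_chi_mul' (c : ZMod n) :
    ∑ s : ZMod n, chi n (c * s) = if c = 0 then (n:ℂ) else 0 := by
  simp_rw [mul_comm c]; exact sum_chi_mul c


lemma chi_sub (a b : ZMod n) : chi n (a - b) = chi n a * (starRingEnd ℂ) (chi n b) := by
  rw [sub_eq_add_neg, chi_add, chi_neg]

lemma chi_sum {ι : Type*} (s : Finset ι) (f : ι → ZMod n) :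
    chi n (∑ i ∈ s, f i) = ∏ i ∈ s, chi n (f i) := by
  classical
  induction s using Finset.cons_induction with
  | empty => simpa using chi_zero
  | cons a s ha ih => rw [Finset.sum_cons, Finset.prod_cons, chi_add, ih]

lemma sum_chi_dot {d : ℕ} (c : Fin d → ZMod n) :
    ∑ m : Fin d → ZMod n, chi n (dot c m) = if c = 0 then ((n:ℂ))^d else 0 := by
  classical
  have h1 : ∀ m : Fin d → ZMod n, chi n (dot c m) = ∏ i, chi n (c i * m i) := by
    intro m; rw [dot, chi_sum]
  simp_rw [h1]
  rw [← Fintype.piFinset_univ, ← Finset.prod_univ_sum (fun _ => (univ : Finset (ZMod n)))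
      (fun i u => chi n (c i * u))]
  by_cases hc : c = 0
  · subst hc
    simp only [Pi.zero_apply, if_true, zero_mul]
    simp [chi_zero, Finset.card_univ]
  · obtain ⟨i, hi⟩ : ∃ i, c i ≠ 0 := by
      by_contra h
      push_neg at h
      exact hc (funext h)
    rw [if_neg hc]
    apply Finset.prod_eq_zero (Finset.mem_univ i)
    rw [sum_chi_mul' (c i), if_neg hi]

lemma abs_Bf_le {d : ℕ} (E : Finset (Fin d → ZMod n)) (m : Fin d → ZMod n) :
    Complex.abs (Bf E m) ≤ (E.card : ℝ) := by
  calc Complex.abs (Bf E m) ≤ ∑ y ∈ E, Complex.abs (chi n (dot m y)) :=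
        Complex.abs.sum_le _ _
    _ = (E.card : ℝ) := by simp [abs_chi]

lemma dot_sub_right {d : ℕ} (m y y' : Fin d → ZMod n) :
    dot m y - dot m y' = dot m (y - y') := by
  rw [dot, dot, dot, ← Finset.sum_sub_distrib]
  exact Finset.sum_congr rfl fun i _ => by simp [Pi.sub_apply, mul_sub]

lemma parseval {d : ℕ} (E : Finset (Fin d → ZMod n)) :
    ∑ m : Fin d → ZMod n, (Complex.abs (Bf E m))^2 = (n:ℝ)^d * (E.card : ℝ) := by
  classical
  have key : ∑ m : Fin d → ZMod n, (Bf E m) * (starRingEnd ℂ) (Bf E m)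
      = ((n:ℂ))^d * (E.card : ℂ) := by
    have expand : ∀ m : Fin d → ZMod n, (Bf E m) * (starRingEnd ℂ) (Bf E m)
        = ∑ y ∈ E, ∑ y' ∈ E, chi n (dot m (y - y')) := by
      intro m
      rw [Bf, map_sum, Finset.sum_mul_sum]
      refine Finset.sum_congr rfl fun y _ => Finset.sum_congr rfl fun y' _ => ?_
      rw [← chi_sub, dot_sub_right]
    simp_rw [expand]
    rw [Finset.sum_comm]
    have : ∀ y ∈ E, ∑ m : Fin d → ZMod n, ∑ y' ∈ E, chi n (dot m (y - y'))
        = ((n:ℂ))^d := by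
      intro y hy
      rw [Finset.sum_comm]
      have h2 : ∀ y' ∈ E, ∑ m : Fin d → ZMod n, chi n (dot m (y - y'))
          = if y - y' = 0 then ((n:ℂ))^d else 0 := by
        intro y' _
        have h3 : ∀ m : Fin d → ZMod n, dot m (y - y') = dot (y - y') m := by
          intro m; rw [dot, dot]; exact Finset.sum_congr rfl fun i _ => mul_comm _ _
        simp_rw [h3]
        exact sum_chi_dot (y - y')
      rw [Finset.sum_congr rfl h2]
      simp_rw [sub_eq_zero]
      rw [Finset.sum_ite_eq E y (fun _ => ((n:ℂ))^d), if_pos hy]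
    rw [Finset.sum_congr rfl this, Finset.sum_const, nsmul_eq_mul]
    ring
  have cast_eq : ((∑ m : Fin d → ZMod n, (Complex.abs (Bf E m))^2 : ℝ) : ℂ)
      = ((n:ℝ)^d * (E.card : ℝ) : ℝ) := by
    push_cast
    calc (∑ m : Fin d → ZMod n, ((Complex.abs (Bf E m) : ℂ))^2)
        = ∑ m : Fin d → ZMod n, (Bf E m) * (starRingEnd ℂ) (Bf E m) := by
          refine Finset.sum_congr rfl fun m _ => ?_
          rw [Complex.mul_conj]
          norm_cast
          rw [← Complex.sq_abs]
      _ = ((n:ℂ))^d * (E.card : ℂ) := key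
  exact_mod_cast cast_eq


lemma key_id (s : ZMod n) {d : ℕ} (x x' y : Fin d → ZMod n) :
    s * (nrm (x - y) - nrm (x' - y))
      = s * (nrm x - nrm x') + dot (fun i => -(2*s) * (x i - x' i)) y := by
  rw [nrm, nrm, nrm, nrm, dot]
  simp only [Pi.sub_apply, ← Finset.sum_sub_distrib, Finset.mul_sum, ← Finset.sum_add_distrib]
  exact Finset.sum_congr rfl fun i _ => by ring

lemma N_identity {d : ℕ} (E : Finset (Fin d → ZMod n)) (x x' : Fin d → ZMod n) :
    ((E.filter fun y => nrm (x - y) = nrm (x' - y)).card : ℂ)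
      = (E.card : ℂ) * (n:ℂ)⁻¹ + (n:ℂ)⁻¹ * ∑ s ∈ univ.erase (0 : ZMod n),
          chi n (s * (nrm x - nrm x')) * Bf E (fun i => -(2*s) * (x i - x' i)) := by
  classical
  have hn : (n:ℂ) ≠ 0 := by exact_mod_cast (NeZero.ne n)
  have h0 : ((E.filter fun y => nrm (x - y) = nrm (x' - y)).card : ℂ)
      = ∑ y ∈ E, if nrm (x - y) = nrm (x' - y) then (1:ℂ) else 0 :=
    (Finset.sum_boole _ _).symm
  have h1 : ∀ y ∈ E, (if nrm (x - y) = nrm (x' - y) then (1:ℂ) else 0)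
      = (n:ℂ)⁻¹ * ∑ s : ZMod n, chi n (s * (nrm (x - y) - nrm (x' - y))) := by
    intro y _
    rw [sum_chi_mul (nrm (x - y) - nrm (x' - y))]
    by_cases h : nrm (x - y) = nrm (x' - y)
    · rw [if_pos h, if_pos (sub_eq_zero.mpr h), inv_mul_cancel₀ hn]
    · rw [if_neg h, if_neg (fun hc => h (sub_eq_zero.mp hc)), mul_zero]
  rw [h0, Finset.sum_congr rfl h1, ← Finset.mul_sum]
  have h2 : ∀ y ∈ E, ∑ s : ZMod n, chi n (s * (nrm (x - y) - nrm (x' - y)))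
      = ∑ s : ZMod n, chi n (s * (nrm x - nrm x'))
          * chi n (dot (fun i => -(2*s) * (x i - x' i)) y) := by
    intro y _
    refine Finset.sum_congr rfl fun s _ => ?_
    rw [← chi_add, ← key_id]
  rw [Finset.sum_congr rfl h2, Finset.sum_comm]
  have h3 : ∀ s : ZMod n, ∑ y ∈ E, chi n (s * (nrm x - nrm x'))
        * chi n (dot (fun i => -(2*s) * (x i - x' i)) y)
      = chi n (s * (nrm x - nrm x')) * Bf E (fun i => -(2*s) * (x i - x' i)) := by
    intro s
    rw [Bf, Finset.mul_sum]
  rw [Finset.sum_congr rfl (fun s _ => h3 s)]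
  rw [← Finset.add_sum_erase _ _ (Finset.mem_univ (0 : ZMod n))]
  have h4 : chi n ((0:ZMod n) * (nrm x - nrm x'))
      * Bf E (fun i => -(2*(0:ZMod n)) * (x i - x' i)) = (E.card : ℂ) := by
    rw [zero_mul, chi_zero]
    have : (fun i : Fin d => -(2*(0:ZMod n)) * (x i - x' i)) = (fun _ => 0) := by
      funext i; ring
    rw [this, one_mul, Bf]
    have : ∀ y ∈ E, chi n (dot (fun _ : Fin d => (0:ZMod n)) y) = 1 := by
      intro y _
      have : dot (fun _ : Fin d => (0:ZMod n)) y = 0 := by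
        rw [dot]; simp
      rw [this, chi_zero]
    rw [Finset.sum_congr rfl this]
    simp
  rw [h4, mul_add]
  ring


lemma val_dvd_helper {s u : ZMod n} (hsu : s * u = 0) :
    (n / Nat.gcd s.val n) ∣ u.val := by
  have hs : s = ((s.val : ℕ) : ZMod n) := by rw [ZMod.natCast_val, ZMod.cast_id]
  have hu : u = ((u.val : ℕ) : ZMod n) := by rw [ZMod.natCast_val, ZMod.cast_id]
  have : ((s.val * u.val : ℕ) : ZMod n) = 0 := by push_cast; rw [← hs, ← hu, hsu]
  have hdvd : n ∣ s.val * u.val := (ZMod.natCast_eq_zero_iff _ n).mp this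
  set g := Nat.gcd s.val n with hg
  have hgpos : 0 < g := Nat.gcd_pos_of_pos_right _ (Nat.pos_of_ne_zero (NeZero.ne n))
  have hgn : g ∣ n := Nat.gcd_dvd_right _ _
  have hgs : g ∣ s.val := Nat.gcd_dvd_left _ _
  have hco : Nat.Coprime (s.val / g) (n / g) := Nat.coprime_div_gcd_div_gcd hgpos
  have h1 : (n / g) ∣ (s.val / g) * u.val := by
    have h2 : g * (n / g) ∣ g * ((s.val / g) * u.val) := by
      rw [Nat.mul_div_cancel' hgn, ← mul_assoc, Nat.mul_div_cancel' hgs]; exact hdvd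
    exact (mul_dvd_mul_iff_left hgpos.ne').mp h2
  exact (Nat.Coprime.dvd_of_dvd_mul_left (Nat.Coprime.symm hco) h1)

lemma ker_card_le (s : ZMod n) :
    (univ.filter fun u : ZMod n => s * u = 0).card ≤ Nat.gcd s.val n := by
  set g := Nat.gcd s.val n with hg
  set m := n / g with hm
  have hgpos : 0 < g := Nat.gcd_pos_of_pos_right _ (Nat.pos_of_ne_zero (NeZero.ne n))
  have hgn : g ∣ n := Nat.gcd_dvd_right _ _
  have hmg : m * g = n := Nat.div_mul_cancel hgn
  have hmpos : 0 < m := by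
    rcases Nat.eq_zero_or_pos m with h | h
    · exfalso; rw [h, zero_mul] at hmg; exact (NeZero.ne n) hmg.symm
    · exact h
  calc (univ.filter fun u : ZMod n => s * u = 0).card
      ≤ (Finset.range g).card := by
        apply Finset.card_le_card_of_injOn (fun u => u.val / m)
        · intro u hu
          simp only [Finset.mem_coe, Finset.mem_filter] at hu
          have hd : m ∣ u.val := val_dvd_helper hu.2
          have hlt : u.val < n := ZMod.val_lt u
          rw [Finset.mem_coe, Finset.mem_range]
          apply Nat.div_lt_of_lt_mul
          omega
        · intro u hu v hv huv
          simp only [Finset.coe_filter, Set.mem_setOf_eq] at hu hv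
          have hdu : m ∣ u.val := val_dvd_helper hu.2
          have hdv : m ∣ v.val := val_dvd_helper hv.2
          have : u.val = v.val := by
            obtain ⟨cu, hcu⟩ := hdu; obtain ⟨cv, hcv⟩ := hdv
            simp only at huv
            rw [hcu, hcv, Nat.mul_div_cancel_left _ hmpos, Nat.mul_div_cancel_left _ hmpos] at huv
            rw [hcu, hcv, huv]
          exact ZMod.val_injective n this
    _ = g := Finset.card_range g


lemma fiber_card_le (s : ZMod n) {d : ℕ} (b : Fin d → ZMod n) :
    (univ.filter fun a : Fin d → ZMod n => (fun i => s * a i) = b).card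
      ≤ (Nat.gcd s.val n) ^ d := by
  classical
  rcases Finset.eq_empty_or_nonempty
      (univ.filter fun a : Fin d → ZMod n => (fun i => s * a i) = b) with h | ⟨a₀, ha₀⟩
  · rw [h]; simp
  · simp only [Finset.mem_filter] at ha₀
    have hker : ∀ i, s * a₀ i = b i := fun i => congrFun ha₀.2 i
    calc (univ.filter fun a : Fin d → ZMod n => (fun i => s * a i) = b).card
        ≤ (Fintype.piFinset fun _ : Fin d => (univ.filter fun u : ZMod n => s * u = 0)).card := by
          apply Finset.card_le_card_of_injOn (fun a => a - a₀)
          · intro a ha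
            simp only [Finset.mem_coe, Finset.mem_filter] at ha
            rw [Finset.mem_coe, Fintype.mem_piFinset]
            intro i
            simp only [Finset.mem_filter, Finset.mem_univ, true_and, Pi.sub_apply]
            rw [mul_sub, congrFun ha.2 i, hker i, sub_self]
          · intro a _ a' _ h
            exact sub_left_injective h
      _ = (univ.filter fun u : ZMod n => s * u = 0).card ^ d := by
          rw [Fintype.card_piFinset]; simp
      _ ≤ (Nat.gcd s.val n) ^ d := Nat.pow_le_pow_left (ker_card_le s) d



lemma sum_gcd_pow_le (hn3 : 3 ≤ n) {d : ℕ} (hd : 1 ≤ d) :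
    ∑ s ∈ (univ.erase (0 : ZMod n)), ((Nat.gcd s.val n : ℝ)) ^ d
      ≤ (n.divisors.card : ℝ) * (n:ℝ) ^ d / (n.minFac : ℝ) ^ (d - 1) := by
  classical
  have hnpos : 0 < n := by omega
  have hγ2 : 2 ≤ n.minFac := (Nat.minFac_prime (by omega)).two_le
  have hγpos : (0:ℝ) < (n.minFac:ℝ) ^ (d-1) := by positivity
  set γ := n.minFac with hγ
  -- key pointwise bound for each b in the image
  have key : ∀ b ∈ (univ.erase (0 : ZMod n)).image (fun s : ZMod n => Nat.gcd s.val n),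
      (((univ.erase (0 : ZMod n)).filter
          (fun s : ZMod n => Nat.gcd s.val n = b)).card : ℝ) * (b:ℝ) ^ d
        ≤ (n:ℝ) ^ d / (γ:ℝ) ^ (d-1) := by
    intro b hb
    obtain ⟨s, hs, hsb⟩ := Finset.mem_image.mp hb
    have hbn : b ∣ n := hsb ▸ Nat.gcd_dvd_right _ _
    have hbpos : 0 < b := hsb ▸ Nat.gcd_pos_of_pos_right _ hnpos
    have hbne : b ≠ n := by
      intro h
      have : n ∣ s.val := by
        have h2 := Nat.gcd_dvd_left s.val n
        rwa [hsb, h] at h2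
      have : s.val = 0 := Nat.eq_zero_of_dvd_of_lt this (ZMod.val_lt s)
      exact (Finset.mem_erase.mp hs).1 ((ZMod.val_eq_zero s).mp this)
    have hnb2 : 2 ≤ n / b := by
      have h1 : n / b ∣ n := Nat.div_dvd_of_dvd hbn
      have h2 : n / b ≠ 1 := fun h => hbne (by rw [← Nat.div_mul_cancel hbn, h, one_mul])
      have h3 : 0 < n / b := Nat.div_pos (Nat.le_of_dvd hnpos hbn) hbpos
      omega
    have hγnb : γ ≤ n / b := Nat.minFac_le_of_dvd hnb2 (Nat.div_dvd_of_dvd hbn)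
    have hbγ : b * γ ≤ n := by
      calc b * γ ≤ b * (n / b) := Nat.mul_le_mul_left b hγnb
        _ = n := Nat.mul_div_cancel' hbn
    -- fiber card ≤ n / b
    have hfib : ((univ.erase (0 : ZMod n)).filter
        (fun s : ZMod n => Nat.gcd s.val n = b)).card ≤ n / b := by
      calc _ ≤ (Finset.range (n / b)).card := by
            apply Finset.card_le_card_of_injOn (fun s => s.val / b)
            · intro u hu
              simp only [Finset.mem_coe, Finset.mem_filter, Finset.mem_erase] at hu
              have hbu : b ∣ u.val := hu.2 ▸ Nat.gcd_dvd_left _ _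
              have hlt : u.val < n := ZMod.val_lt u
              simp only [Finset.mem_coe, Finset.mem_range]
              obtain ⟨c, hc⟩ := hbu
              have : u.val < b * (n / b) := by rw [Nat.mul_div_cancel' hbn]; exact hlt
              rw [hc, Nat.mul_div_cancel_left _ hbpos]
              exact lt_of_mul_lt_mul_left (by rw [← hc]; exact this) (Nat.zero_le b)
            · intro u hu v hv huv
              simp only [Finset.coe_filter, Set.mem_setOf_eq, Finset.mem_erase] at hu hv
              have hbu : b ∣ u.val := hu.2 ▸ Nat.gcd_dvd_left _ _
              have hbv : b ∣ v.val := hv.2 ▸ Nat.gcd_dvd_left _ _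
              have : u.val = v.val := by
                obtain ⟨cu, hcu⟩ := hbu; obtain ⟨cv, hcv⟩ := hbv
                simp only at huv
                rw [hcu, hcv, Nat.mul_div_cancel_left _ hbpos,
                  Nat.mul_div_cancel_left _ hbpos] at huv
                rw [hcu, hcv, huv]
              exact ZMod.val_injective n this
        _ = n / b := Finset.card_range _
    -- combine
    have h1 : ((n / b : ℕ) : ℝ) * (b:ℝ)^d = (n:ℝ) * (b:ℝ)^(d-1) := by
      have : ((n / b : ℕ) : ℝ) = (n:ℝ) / (b:ℝ) := by
        rw [Nat.cast_div hbn (by exact_mod_cast hbpos.ne')]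
      rw [this]
      have hbne0 : (b:ℝ) ≠ 0 := by exact_mod_cast hbpos.ne'
      rw [show d = (d-1)+1 by omega, pow_succ]
      field_simp
      congr 1
    have h2 : (n:ℝ) * (b:ℝ)^(d-1) * (γ:ℝ)^(d-1) ≤ (n:ℝ) * (n:ℝ)^(d-1) := by
      have : ((b:ℝ) * (γ:ℝ))^(d-1) ≤ ((n:ℝ))^(d-1) := by
        apply pow_le_pow_left₀ (by positivity)
        exact_mod_cast hbγ
      rw [mul_pow] at this
      calc (n:ℝ) * (b:ℝ)^(d-1) * (γ:ℝ)^(d-1) = (n:ℝ) * ((b:ℝ)^(d-1) * (γ:ℝ)^(d-1)) := by ring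
        _ ≤ (n:ℝ) * (n:ℝ)^(d-1) := by
            apply mul_le_mul_of_nonneg_left this (by positivity)
    calc (((univ.erase (0 : ZMod n)).filter
          (fun s : ZMod n => Nat.gcd s.val n = b)).card : ℝ) * (b:ℝ) ^ d
        ≤ ((n / b : ℕ) : ℝ) * (b:ℝ)^d := by
          apply mul_le_mul_of_nonneg_right _ (by positivity)
          exact_mod_cast hfib
      _ = (n:ℝ) * (b:ℝ)^(d-1) := h1
      _ ≤ (n:ℝ)^d / (γ:ℝ)^(d-1) := by
          rw [le_div_iff₀ hγpos, show d = (d-1)+1 by omega]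
          calc (n:ℝ) * (b:ℝ)^(d-1) * (γ:ℝ)^(d-1) ≤ (n:ℝ) * (n:ℝ)^(d-1) := h2
            _ = (n:ℝ)^(d-1+1) := by ring
  -- assemble via sum_comp
  rw [Finset.sum_comp (fun b : ℕ => ((b:ℝ))^d) (fun s : ZMod n => Nat.gcd s.val n)]
  have himg : ((univ.erase (0 : ZMod n)).image (fun s : ZMod n => Nat.gcd s.val n)) ⊆
      n.divisors := by
    intro b hb
    obtain ⟨s, _, hsb⟩ := Finset.mem_image.mp hb
    exact Nat.mem_divisors.mpr ⟨hsb ▸ Nat.gcd_dvd_right _ _, NeZero.ne n⟩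
  calc ∑ b ∈ (univ.erase (0 : ZMod n)).image (fun s : ZMod n => Nat.gcd s.val n),
        (((univ.erase (0 : ZMod n)).filter
          (fun s : ZMod n => Nat.gcd s.val n = b)).card) • ((b:ℝ))^d
      ≤ ∑ _b ∈ (univ.erase (0 : ZMod n)).image (fun s : ZMod n => Nat.gcd s.val n),
          (n:ℝ)^d / (γ:ℝ)^(d-1) := by
        apply Finset.sum_le_sum
        intro b hb
        rw [nsmul_eq_mul]
        exact key b hb
    _ = (((univ.erase (0 : ZMod n)).image (fun s : ZMod n => Nat.gcd s.val n)).card : ℝ)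
          * ((n:ℝ)^d / (γ:ℝ)^(d-1)) := by rw [Finset.sum_const, nsmul_eq_mul]
    _ ≤ (n.divisors.card : ℝ) * ((n:ℝ)^d / (γ:ℝ)^(d-1)) := by
        apply mul_le_mul_of_nonneg_right _ (by positivity)
        exact_mod_cast Finset.card_le_card himg
    _ = (n.divisors.card : ℝ) * (n:ℝ)^d / (γ:ℝ)^(d-1) := by ring


lemma exists_unit_neg_two (hodd : Odd n) : ∃ u : (ZMod n)ˣ, (u : ZMod n) = -2 := by
  have h2 : IsUnit (2 : ZMod n) := by
    have hco : Nat.Coprime 2 n := Nat.coprime_two_left.mpr hodd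
    have := (ZMod.isUnit_iff_coprime 2 n).mpr hco
    simpa using this
  obtain ⟨u, hu⟩ := h2.neg
  exact ⟨u, hu⟩

lemma reindex_sum (hodd : Odd n) {d : ℕ} (c : Fin d → ZMod n)
    (F : (Fin d → ZMod n) → ℝ) :
    ∑ s ∈ univ.erase (0 : ZMod n), F (fun i => -(2*s) * (c i))
      = ∑ s ∈ univ.erase (0 : ZMod n), F (fun i => s * (c i)) := by
  classical
  obtain ⟨u, hu⟩ := exists_unit_neg_two hodd
  refine Finset.sum_nbij' (fun s => (u : ZMod n) * s) (fun s => ((u⁻¹ : (ZMod n)ˣ) : ZMod n) * s)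
    ?_ ?_ ?_ ?_ ?_
  · intro s hs
    rw [Finset.mem_erase] at hs ⊢
    refine ⟨fun h => hs.1 ?_, Finset.mem_univ _⟩
    calc s = ((u⁻¹ : (ZMod n)ˣ) : ZMod n) * ((u : ZMod n) * s) := by
          rw [← mul_assoc, Units.inv_mul, one_mul]
      _ = 0 := by rw [h, mul_zero]
  · intro s hs
    rw [Finset.mem_erase] at hs ⊢
    refine ⟨fun h => hs.1 ?_, Finset.mem_univ _⟩
    calc s = ((u : (ZMod n)ˣ) : ZMod n) * (((u⁻¹ : (ZMod n)ˣ) : ZMod n) * s) := by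
          rw [← mul_assoc, Units.mul_inv, one_mul]
      _ = 0 := by rw [h, mul_zero]
  · intro s _
    show ((u⁻¹ : (ZMod n)ˣ) : ZMod n) * ((u : ZMod n) * s) = s
    rw [← mul_assoc, Units.inv_mul, one_mul]
  · intro s _
    show ((u : (ZMod n)ˣ) : ZMod n) * (((u⁻¹ : (ZMod n)ˣ) : ZMod n) * s) = s
    rw [← mul_assoc, Units.mul_inv, one_mul]
  · intro s _
    congr 1
    funext i
    rw [hu]
    ring

lemma N_le (hodd : Odd n) {d : ℕ} (E : Finset (Fin d → ZMod n)) (x x' : Fin d → ZMod n) :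
    ((E.filter fun y => nrm (x - y) = nrm (x' - y)).card : ℝ)
      ≤ (E.card : ℝ) / n + (n:ℝ)⁻¹ * ∑ s ∈ univ.erase (0 : ZMod n),
          Complex.abs (Bf E (fun i => s * (x i - x' i))) := by
  classical
  have hid := N_identity E x x'
  have hA : ((E.card : ℂ) * (n:ℂ)⁻¹) = (((E.card : ℝ) / n : ℝ) : ℂ) := by push_cast; ring
  rw [hA] at hid
  have hre : ((E.filter fun y => nrm (x - y) = nrm (x' - y)).card : ℝ)
      = (E.card : ℝ) / n + ((n:ℂ)⁻¹ * ∑ s ∈ univ.erase (0 : ZMod n),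
          chi n (s * (nrm x - nrm x')) * Bf E (fun i => -(2*s) * (x i - x' i))).re := by
    have h := congrArg Complex.re hid
    rw [Complex.add_re, Complex.ofReal_re, Complex.natCast_re] at h
    exact h
  rw [hre]
  have habs : ((n:ℂ)⁻¹ * ∑ s ∈ univ.erase (0 : ZMod n),
      chi n (s * (nrm x - nrm x')) * Bf E (fun i => -(2*s) * (x i - x' i))).re
      ≤ (n:ℝ)⁻¹ * ∑ s ∈ univ.erase (0 : ZMod n),
          Complex.abs (Bf E (fun i => -(2*s) * (x i - x' i))) := by
    calc (_ : ℂ).re ≤ Complex.abs _ := Complex.re_le_abs _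
      _ = Complex.abs ((n:ℂ)⁻¹) * Complex.abs (∑ s ∈ univ.erase (0 : ZMod n),
          chi n (s * (nrm x - nrm x')) * Bf E (fun i => -(2*s) * (x i - x' i))) := by
          rw [map_mul]
      _ ≤ (n:ℝ)⁻¹ * ∑ s ∈ univ.erase (0 : ZMod n),
          Complex.abs (Bf E (fun i => -(2*s) * (x i - x' i))) := by
          apply mul_le_mul
          · rw [map_inv₀, Complex.abs_natCast]
          · calc Complex.abs (∑ s ∈ univ.erase (0 : ZMod n),
                chi n (s * (nrm x - nrm x')) * Bf E (fun i => -(2*s) * (x i - x' i)))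
                ≤ ∑ s ∈ univ.erase (0 : ZMod n), Complex.abs
                    (chi n (s * (nrm x - nrm x')) * Bf E (fun i => -(2*s) * (x i - x' i))) :=
                  Complex.abs.sum_le _ _
              _ = ∑ s ∈ univ.erase (0 : ZMod n),
                  Complex.abs (Bf E (fun i => -(2*s) * (x i - x' i))) := by
                  refine Finset.sum_congr rfl fun s _ => ?_
                  rw [map_mul, abs_chi, one_mul]
          · positivity
          · positivity
  calc (E.card : ℝ) / n + ((n:ℂ)⁻¹ * ∑ s ∈ univ.erase (0 : ZMod n),
          chi n (s * (nrm x - nrm x')) * Bf E (fun i => -(2*s) * (x i - x' i))).re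
      ≤ (E.card : ℝ) / n + (n:ℝ)⁻¹ * ∑ s ∈ univ.erase (0 : ZMod n),
          Complex.abs (Bf E (fun i => -(2*s) * (x i - x' i))) := add_le_add_right habs _
    _ = (E.card : ℝ) / n + (n:ℝ)⁻¹ * ∑ s ∈ univ.erase (0 : ZMod n),
          Complex.abs (Bf E (fun i => s * (x i - x' i))) := by
        rw [reindex_sum hodd (fun i => x i - x' i) (fun m => Complex.abs (Bf E m))]


lemma expand_pair (s : ZMod n) {d : ℕ} (E : Finset (Fin d → ZMod n))
    (x x' y : Fin d → ZMod n) :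
    chi n (s * (nrm x - nrm x')) * chi n (dot (fun i => -(2*s) * (x i - x' i)) y)
      = chi n (s * nrm (x - y)) * (starRingEnd ℂ) (chi n (s * nrm (x' - y))) := by
  rw [← chi_add, ← key_id, mul_sub, chi_sub]

/-- The inner double sum over a pair `(x,x')` of `chi * Bf`, summed over `E²`,
equals a sum of `normSq` over `y ∈ E`. -/
lemma A_eq_normSq (s : ZMod n) {d : ℕ} (E : Finset (Fin d → ZMod n)) :
    ∑ x ∈ E, ∑ x' ∈ E, chi n (s * (nrm x - nrm x'))
        * Bf E (fun i => -(2*s) * (x i - x' i))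
      = ((∑ y ∈ E, Complex.normSq (∑ x ∈ E, chi n (s * nrm (x - y))) : ℝ) : ℂ) := by
  classical
  have h1 : ∀ x ∈ E, ∀ x' ∈ E, chi n (s * (nrm x - nrm x'))
      * Bf E (fun i => -(2*s) * (x i - x' i))
      = ∑ y ∈ E, chi n (s * nrm (x - y)) * (starRingEnd ℂ) (chi n (s * nrm (x' - y))) := by
    intro x _ x' _
    rw [Bf, Finset.mul_sum]
    exact Finset.sum_congr rfl fun y _ => expand_pair s E x x' y
  calc ∑ x ∈ E, ∑ x' ∈ E, chi n (s * (nrm x - nrm x'))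
        * Bf E (fun i => -(2*s) * (x i - x' i))
      = ∑ x ∈ E, ∑ x' ∈ E, ∑ y ∈ E,
          chi n (s * nrm (x - y)) * (starRingEnd ℂ) (chi n (s * nrm (x' - y))) :=
        Finset.sum_congr rfl fun x hx => Finset.sum_congr rfl fun x' hx' => h1 x hx x' hx'
    _ = ∑ y ∈ E, (∑ x ∈ E, chi n (s * nrm (x - y)))
          * (starRingEnd ℂ) (∑ x' ∈ E, chi n (s * nrm (x' - y))) := by
        have hsw : ∀ x ∈ E, ∑ x' ∈ E, ∑ y ∈ E,
            chi n (s * nrm (x - y)) * (starRingEnd ℂ) (chi n (s * nrm (x' - y)))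
            = ∑ y ∈ E, ∑ x' ∈ E,
            chi n (s * nrm (x - y)) * (starRingEnd ℂ) (chi n (s * nrm (x' - y))) :=
          fun x _ => Finset.sum_comm
        rw [Finset.sum_congr rfl hsw, Finset.sum_comm]
        refine Finset.sum_congr rfl fun y _ => ?_
        rw [map_sum, Finset.sum_mul_sum]
    _ = ((∑ y ∈ E, Complex.normSq (∑ x ∈ E, chi n (s * nrm (x - y))) : ℝ) : ℂ) := by
        push_cast
        refine Finset.sum_congr rfl fun y _ => ?_
        rw [Complex.mul_conj]

lemma A'_eq (s : ZMod n) {d : ℕ} (E : Finset (Fin d → ZMod n)) :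
    ((∑ y : Fin d → ZMod n, Complex.normSq (∑ x ∈ E, chi n (s * nrm (x - y))) : ℝ) : ℂ)
    = ∑ x ∈ E, ∑ x' ∈ E, chi n (s * (nrm x - nrm x'))
        * (if (fun i => -(2*s) * (x i - x' i)) = (0 : Fin d → ZMod n)
            then ((n:ℂ))^d else 0) := by
  classical
  calc ((∑ y : Fin d → ZMod n, Complex.normSq (∑ x ∈ E, chi n (s * nrm (x - y))) : ℝ) : ℂ)
      = ∑ y : Fin d → ZMod n, (∑ x ∈ E, chi n (s * nrm (x - y)))
          * (starRingEnd ℂ) (∑ x' ∈ E, chi n (s * nrm (x' - y))) := by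
        push_cast
        refine Finset.sum_congr rfl fun y _ => ?_
        rw [Complex.mul_conj]
    _ = ∑ y : Fin d → ZMod n, ∑ x ∈ E, ∑ x' ∈ E,
          chi n (s * nrm (x - y)) * (starRingEnd ℂ) (chi n (s * nrm (x' - y))) := by
        refine Finset.sum_congr rfl fun y _ => ?_
        rw [map_sum, Finset.sum_mul_sum]
    _ = ∑ x ∈ E, ∑ x' ∈ E, ∑ y : Fin d → ZMod n,
          chi n (s * nrm (x - y)) * (starRingEnd ℂ) (chi n (s * nrm (x' - y))) := by
        rw [Finset.sum_comm]
        refine Finset.sum_congr rfl fun x _ => Finset.sum_comm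
    _ = ∑ x ∈ E, ∑ x' ∈ E, chi n (s * (nrm x - nrm x'))
          * (if (fun i => -(2*s) * (x i - x' i)) = (0 : Fin d → ZMod n)
              then ((n:ℂ))^d else 0) := by
        refine Finset.sum_congr rfl fun x _ => Finset.sum_congr rfl fun x' _ => ?_
        have h2 : ∑ y : Fin d → ZMod n,
            chi n (s * nrm (x - y)) * (starRingEnd ℂ) (chi n (s * nrm (x' - y)))
            = ∑ y : Fin d → ZMod n, chi n (s * (nrm x - nrm x'))
                * chi n (dot (fun i => -(2*s) * (x i - x' i)) y) :=
          Finset.sum_congr rfl fun y _ => (expand_pair s E x x' y).symm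
        rw [h2, ← Finset.mul_sum]
        congr 1
        exact sum_chi_dot (fun i => -(2*s) * (x i - x' i))

lemma N_re {d : ℕ} (E : Finset (Fin d → ZMod n)) (x x' : Fin d → ZMod n) :
    ((E.filter fun y => nrm (x - y) = nrm (x' - y)).card : ℝ)
      = (E.card : ℝ) / n + ((n:ℂ)⁻¹ * ∑ s ∈ univ.erase (0 : ZMod n),
          chi n (s * (nrm x - nrm x')) * Bf E (fun i => -(2*s) * (x i - x' i))).re := by
  have hid := N_identity E x x'
  have hA : ((E.card : ℂ) * (n:ℂ)⁻¹) = (((E.card : ℝ) / n : ℝ) : ℂ) := by push_cast; ring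
  rw [hA] at hid
  have h := congrArg Complex.re hid
  rw [Complex.add_re, Complex.ofReal_re, Complex.natCast_re] at h
  exact h

lemma k1_bound (hodd : Odd n) (hn3 : 3 ≤ n) {d : ℕ} (hd : 1 ≤ d)
    (E : Finset (Fin d → ZMod n)) :
    ∑ x ∈ E, ∑ x' ∈ E, ((E.filter fun y => nrm (x - y) = nrm (x' - y)).card : ℝ)
      ≤ (E.card : ℝ)^3 / n
        + (n.divisors.card : ℝ) * (n:ℝ)^(2*d-1) * (E.card : ℝ) / (n.minFac : ℝ)^(d-1) := by
  classical
  obtain ⟨u, hu⟩ := exists_unit_neg_two hodd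
  have hn0 : (0:ℝ) < n := by exact_mod_cast Nat.pos_of_ne_zero (NeZero.ne n)
  have hγ0 : (0:ℝ) < ((n.minFac:ℝ))^(d-1) := by
    have : 0 < n.minFac := Nat.minFac_pos n
    positivity
  set a : ZMod n → ℝ := fun s => ∑ y ∈ E, Complex.normSq (∑ x ∈ E, chi n (s * nrm (x - y)))
    with ha
  have hnC : ((n:ℂ))⁻¹ = (((n:ℝ)⁻¹ : ℝ) : ℂ) := by push_cast; rfl
  -- exact identity for the double sum
  have hid : ∑ x ∈ E, ∑ x' ∈ E, ((E.filter fun y => nrm (x - y) = nrm (x' - y)).card : ℝ)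
      = (E.card:ℝ)^3 / n + (n:ℝ)⁻¹ * ∑ s ∈ univ.erase (0 : ZMod n), a s := by
    rw [Finset.sum_congr rfl (fun x (_ : x ∈ E) =>
      Finset.sum_congr rfl (fun x' (_ : x' ∈ E) => N_re E x x'))]
    rw [Finset.sum_congr rfl (fun x (_ : x ∈ E) => Finset.sum_add_distrib),
      Finset.sum_add_distrib]
    congr 1
    · simp only [Finset.sum_const, nsmul_eq_mul]
      ring
    · -- sum of real parts
      calc ∑ x ∈ E, ∑ x' ∈ E, ((n:ℂ)⁻¹ * ∑ s ∈ univ.erase (0 : ZMod n),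
            chi n (s * (nrm x - nrm x')) * Bf E (fun i => -(2*s) * (x i - x' i))).re
          = (∑ x ∈ E, ∑ x' ∈ E, (n:ℂ)⁻¹ * ∑ s ∈ univ.erase (0 : ZMod n),
            chi n (s * (nrm x - nrm x')) * Bf E (fun i => -(2*s) * (x i - x' i))).re := by
            rw [Complex.re_sum]
            exact Finset.sum_congr rfl fun x _ => (Complex.re_sum _ _).symm
        _ = ((n:ℂ)⁻¹ * ∑ s ∈ univ.erase (0 : ZMod n), ∑ x ∈ E, ∑ x' ∈ E,
            chi n (s * (nrm x - nrm x')) * Bf E (fun i => -(2*s) * (x i - x' i))).re := by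
            congr 1
            rw [Finset.sum_congr rfl (fun x (_ : x ∈ E) => (Finset.mul_sum E _ ((n:ℂ)⁻¹)).symm),
              ← Finset.mul_sum]
            congr 1
            rw [Finset.sum_congr rfl (fun x (_ : x ∈ E) => Finset.sum_comm)]
            exact Finset.sum_comm
        _ = (n:ℝ)⁻¹ * ∑ s ∈ univ.erase (0 : ZMod n), a s := by
            rw [Finset.sum_congr rfl (fun s (_ : s ∈ univ.erase (0:ZMod n)) =>
              A_eq_normSq s E)]
            rw [hnC, ← Complex.ofReal_sum, ← Complex.ofReal_mul, Complex.ofReal_re]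
  -- pointwise bound on a s
  have hbound : ∀ s ∈ univ.erase (0 : ZMod n),
      a s ≤ (n:ℝ)^d * ((E.card : ℝ) * ((Nat.gcd s.val n : ℝ))^d) := by
    intro s _
    have h1 : a s ≤ ∑ y : Fin d → ZMod n,
        Complex.normSq (∑ x ∈ E, chi n (s * nrm (x - y))) :=
      Finset.sum_le_sum_of_subset_of_nonneg (Finset.subset_univ E)
        (fun y _ _ => Complex.normSq_nonneg _)
    set A' : ℝ := ∑ y : Fin d → ZMod n,
        Complex.normSq (∑ x ∈ E, chi n (s * nrm (x - y))) with hA'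
    have hA'nonneg : 0 ≤ A' := Finset.sum_nonneg fun y _ => Complex.normSq_nonneg _
    have h2 : A' = Complex.abs ((A' : ℝ) : ℂ) := by
      rw [Complex.abs_ofReal, abs_of_nonneg hA'nonneg]
    have h3 : Complex.abs ((A' : ℝ) : ℂ) ≤ ∑ x ∈ E, ∑ x' ∈ E,
        (if (fun i => -(2*s) * (x i - x' i)) = (0 : Fin d → ZMod n)
          then ((n:ℝ))^d else 0) := by
      rw [hA', A'_eq]
      refine (Complex.abs.sum_le _ _).trans ?_
      refine Finset.sum_le_sum fun x _ => ?_
      refine (Complex.abs.sum_le _ _).trans ?_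
      refine Finset.sum_le_sum fun x' _ => le_of_eq ?_
      rw [map_mul, abs_chi, one_mul]
      by_cases hcond : (fun i => -(2*s) * (x i - x' i)) = (0 : Fin d → ZMod n)
      · rw [if_pos hcond, if_pos hcond, map_pow, Complex.abs_natCast]
      · rw [if_neg hcond, if_neg hcond, map_zero]
    have h4 : ∑ x ∈ E, ∑ x' ∈ E,
        (if (fun i => -(2*s) * (x i - x' i)) = (0 : Fin d → ZMod n)
          then ((n:ℝ))^d else 0)
        ≤ ∑ _x ∈ E, (n:ℝ)^d * ((Nat.gcd s.val n : ℝ))^d := by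
      refine Finset.sum_le_sum fun x _ => ?_
      have hcard : (E.filter fun x' =>
          (fun i => -(2*s) * (x i - x' i)) = (0 : Fin d → ZMod n)).card
          ≤ (Nat.gcd s.val n)^d := by
        refine le_trans (Finset.card_le_card_of_injOn (fun x' => x - x') ?_ ?_)
          (fiber_card_le s 0)
        · intro x' hx'
          rw [Finset.mem_coe, Finset.mem_filter] at hx'
          rw [Finset.mem_coe, Finset.mem_filter]
          refine ⟨Finset.mem_univ _, ?_⟩
          funext i
          have hc := congrFun hx'.2 i
          simp only [Pi.zero_apply] at hc
          have hc' : (u : ZMod n) * (s * ((x - x') i)) = 0 := by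
            rw [hu]
            simp only [Pi.sub_apply]
            calc (-2 : ZMod n) * (s * (x i - x' i)) = -(2*s) * (x i - x' i) := by ring
              _ = 0 := hc
          simp only [Pi.zero_apply]
          calc s * ((x - x') i) = ((u⁻¹ : (ZMod n)ˣ) : ZMod n)
                * ((u : ZMod n) * (s * ((x - x') i))) := by
                rw [← mul_assoc, Units.inv_mul, one_mul]
            _ = 0 := by rw [hc', mul_zero]
        · intro p _ q _ hpq
          exact sub_right_injective hpq
      calc ∑ x' ∈ E, (if (fun i => -(2*s) * (x i - x' i)) = (0 : Fin d → ZMod n)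
            then ((n:ℝ))^d else 0)
          = (n:ℝ)^d * ∑ x' ∈ E, (if (fun i => -(2*s) * (x i - x' i))
              = (0 : Fin d → ZMod n) then (1:ℝ) else 0) := by
            rw [Finset.mul_sum]
            exact Finset.sum_congr rfl fun x' _ => (mul_boole _ _).symm
        _ = (n:ℝ)^d * ((E.filter fun x' => (fun i => -(2*s) * (x i - x' i))
              = (0 : Fin d → ZMod n)).card : ℝ) := by rw [Finset.sum_boole]
        _ ≤ (n:ℝ)^d * ((Nat.gcd s.val n : ℝ))^d := by
            apply mul_le_mul_of_nonneg_left _ (by positivity)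
            exact_mod_cast hcard
    calc a s ≤ A' := h1
      _ = Complex.abs ((A' : ℝ) : ℂ) := h2
      _ ≤ ∑ x ∈ E, ∑ x' ∈ E, (if (fun i => -(2*s) * (x i - x' i))
            = (0 : Fin d → ZMod n) then ((n:ℝ))^d else 0) := h3
      _ ≤ ∑ _x ∈ E, (n:ℝ)^d * ((Nat.gcd s.val n : ℝ))^d := h4
      _ = (n:ℝ)^d * ((E.card : ℝ) * ((Nat.gcd s.val n : ℝ))^d) := by
          rw [Finset.sum_const, nsmul_eq_mul]; ring
  -- combine
  rw [hid]
  refine add_le_add_right ?_ _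
  have hsum_a : ∑ s ∈ univ.erase (0 : ZMod n), a s
      ≤ (n:ℝ)^d * (E.card:ℝ) * ((n.divisors.card : ℝ) * (n:ℝ)^d / (n.minFac : ℝ)^(d-1)) := by
    calc ∑ s ∈ univ.erase (0 : ZMod n), a s
        ≤ ∑ s ∈ univ.erase (0 : ZMod n),
            (n:ℝ)^d * ((E.card : ℝ) * ((Nat.gcd s.val n : ℝ))^d) :=
          Finset.sum_le_sum hbound
      _ = (n:ℝ)^d * (E.card:ℝ) * ∑ s ∈ univ.erase (0 : ZMod n),
            ((Nat.gcd s.val n : ℝ))^d := by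
          rw [Finset.mul_sum]
          exact Finset.sum_congr rfl fun s _ => by ring
      _ ≤ (n:ℝ)^d * (E.card:ℝ)
            * ((n.divisors.card : ℝ) * (n:ℝ)^d / (n.minFac : ℝ)^(d-1)) := by
          apply mul_le_mul_of_nonneg_left (sum_gcd_pow_le hn3 hd) (by positivity)
  calc (n:ℝ)⁻¹ * ∑ s ∈ univ.erase (0 : ZMod n), a s
      ≤ (n:ℝ)⁻¹ * ((n:ℝ)^d * (E.card:ℝ)
          * ((n.divisors.card : ℝ) * (n:ℝ)^d / (n.minFac : ℝ)^(d-1))) :=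
        mul_le_mul_of_nonneg_left hsum_a (by positivity)
    _ = (n.divisors.card : ℝ) * (n:ℝ)^(2*d-1) * (E.card : ℝ) / (n.minFac : ℝ)^(d-1) := by
        have hpow : (n:ℝ)^d * (n:ℝ)^d = (n:ℝ)^(2*d-1) * n := by
          rw [← pow_add, ← pow_succ]
          congr 1
          omega
        rw [show (n:ℝ)⁻¹ * ((n:ℝ)^d * (E.card:ℝ)
            * ((n.divisors.card : ℝ) * (n:ℝ)^d / (n.minFac : ℝ)^(d-1)))
          = ((n:ℝ)^d * (n:ℝ)^d) * (n:ℝ)⁻¹ * (n.divisors.card : ℝ) * (E.card : ℝ)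
              / (n.minFac : ℝ)^(d-1) by ring]
        rw [hpow, mul_assoc ((n:ℝ)^(2*d-1)) (n:ℝ) (n:ℝ)⁻¹, mul_inv_cancel₀ hn0.ne', mul_one]
        ring


lemma add_pow_le' {a b : ℝ} (ha : 0 ≤ a) (hb : 0 ≤ b) (k : ℕ) :
    (a + b)^k ≤ 2^k * (a^k + b^k) := by
  have h1 : a + b ≤ 2 * max a b := by
    rcases le_total a b with h | h
    · rw [max_eq_right h]; linarith
    · rw [max_eq_left h]; linarith
  have h2 : (a + b)^k ≤ (2 * max a b)^k :=
    pow_le_pow_left₀ (by positivity) h1 k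
  rw [mul_pow] at h2
  have h3 : (max a b)^k ≤ a^k + b^k := by
    rcases le_total a b with h | h
    · rw [max_eq_right h]; exact le_add_of_nonneg_left (pow_nonneg ha k)
    · rw [max_eq_left h]; exact le_add_of_nonneg_right (pow_nonneg hb k)
  calc (a+b)^k ≤ 2^k * (max a b)^k := h2
    _ ≤ 2^k * (a^k + b^k) := by
        apply mul_le_mul_of_nonneg_left h3 (by positivity)

-- moment bound
lemma sum_Bf_pow_le {d k : ℕ} (hk : 2 ≤ k) (E : Finset (Fin d → ZMod n)) :
    ∑ m : Fin d → ZMod n, (Complex.abs (Bf E m))^k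
      ≤ (E.card : ℝ)^(k-2) * ((n:ℝ)^d * (E.card : ℝ)) := by
  calc ∑ m : Fin d → ZMod n, (Complex.abs (Bf E m))^k
      ≤ ∑ m : Fin d → ZMod n, (E.card : ℝ)^(k-2) * (Complex.abs (Bf E m))^2 := by
        refine Finset.sum_le_sum fun m _ => ?_
        have : (Complex.abs (Bf E m))^k
            = (Complex.abs (Bf E m))^(k-2) * (Complex.abs (Bf E m))^2 := by
          rw [← pow_add]; congr 1; omega
        rw [this]
        apply mul_le_mul_of_nonneg_right _ (by positivity)
        exact pow_le_pow_left₀ (by positivity) (abs_Bf_le E m) _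
    _ = (E.card : ℝ)^(k-2) * ((n:ℝ)^d * (E.card : ℝ)) := by
        rw [← Finset.mul_sum, parseval]

lemma k2_bound (hodd : Odd n) (hn3 : 3 ≤ n) {d k : ℕ} (hd : 1 ≤ d) (hk : 2 ≤ k)
    (E : Finset (Fin d → ZMod n)) :
    ∑ x ∈ E, ∑ x' ∈ E, ((E.filter fun y => nrm (x - y) = nrm (x' - y)).card : ℝ)^k
      ≤ 2^k * ((E.card : ℝ)^(k+2) / (n:ℝ)^k
        + (n.divisors.card : ℝ) * (n:ℝ)^(2*d-1) * (E.card : ℝ)^k / (n.minFac : ℝ)^(d-1)) := by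
  classical
  have hn0 : (0:ℝ) < n := by exact_mod_cast Nat.pos_of_ne_zero (NeZero.ne n)
  set r : (Fin d → ZMod n) → (Fin d → ZMod n) → ℝ := fun x x' =>
    (n:ℝ)⁻¹ * ∑ s ∈ univ.erase (0 : ZMod n),
      Complex.abs (Bf E (fun i => s * (x i - x' i))) with hr
  have hrnonneg : ∀ x x', 0 ≤ r x x' := by
    intro x x'
    apply mul_nonneg (by positivity)
    exact Finset.sum_nonneg fun s _ => AbsoluteValue.nonneg _ _
  -- pointwise bound
  have hNk : ∀ x x', ((E.filter fun y => nrm (x - y) = nrm (x' - y)).card : ℝ)^k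
      ≤ 2^k * (((E.card : ℝ)/n)^k + (r x x')^k) := by
    intro x x'
    calc ((E.filter fun y => nrm (x - y) = nrm (x' - y)).card : ℝ)^k
        ≤ ((E.card : ℝ)/n + r x x')^k := by
          apply pow_le_pow_left₀ (by positivity) (N_le hodd E x x')
      _ ≤ 2^k * (((E.card : ℝ)/n)^k + (r x x')^k) :=
          add_pow_le' (by positivity) (hrnonneg x x') k
  -- bound on the r^k double sum
  have hrk : ∑ x ∈ E, ∑ x' ∈ E, (r x x')^k
      ≤ (n.divisors.card : ℝ) * (n:ℝ)^(2*d-1) * (E.card : ℝ)^k / (n.minFac : ℝ)^(d-1) := by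
    -- step (a): Jensen
    have ha : ∀ x x', (r x x')^k ≤ (n:ℝ)⁻¹ * ∑ s ∈ univ.erase (0 : ZMod n),
        (Complex.abs (Bf E (fun i => s * (x i - x' i))))^k := by
      intro x x'
      have hcard : ((univ.erase (0 : ZMod n)).card : ℝ) = (n:ℝ) - 1 := by
        rw [Finset.card_erase_of_mem (Finset.mem_univ _), Finset.card_univ, ZMod.card]
        have : 1 ≤ n := Nat.pos_of_ne_zero (NeZero.ne n)
        push_cast [Nat.cast_sub this]
        ring
      have hjensen := pow_sum_le_card_mul_sum_pow
        (s := univ.erase (0 : ZMod n))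
        (f := fun s => Complex.abs (Bf E (fun i => s * (x i - x' i))))
        (fun s _ => AbsoluteValue.nonneg _ _) (k - 1)
      rw [show k - 1 + 1 = k by omega] at hjensen
      rw [hr]
      simp only []
      rw [mul_pow]
      calc ((n:ℝ)⁻¹)^k * (∑ s ∈ univ.erase (0 : ZMod n),
            Complex.abs (Bf E (fun i => s * (x i - x' i))))^k
          ≤ ((n:ℝ)⁻¹)^k * (((univ.erase (0 : ZMod n)).card : ℝ)^(k-1)
              * ∑ s ∈ univ.erase (0 : ZMod n),
                (Complex.abs (Bf E (fun i => s * (x i - x' i))))^k) := by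
            apply mul_le_mul_of_nonneg_left hjensen (by positivity)
        _ ≤ ((n:ℝ)⁻¹)^k * ((n:ℝ)^(k-1)
              * ∑ s ∈ univ.erase (0 : ZMod n),
                (Complex.abs (Bf E (fun i => s * (x i - x' i))))^k) := by
            apply mul_le_mul_of_nonneg_left _ (by positivity)
            apply mul_le_mul_of_nonneg_right _ (Finset.sum_nonneg fun s _ => by positivity)
            rw [hcard]
            apply pow_le_pow_left₀ (by linarith) (by linarith)
        _ = (n:ℝ)⁻¹ * ∑ s ∈ univ.erase (0 : ZMod n),
                (Complex.abs (Bf E (fun i => s * (x i - x' i))))^k := by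
            rw [← mul_assoc]
            congr 1
            rw [inv_pow]
            rw [show (n:ℝ)^k = (n:ℝ)^(k-1) * n by rw [← pow_succ]; congr 1; omega]
            rw [mul_inv]
            field_simp
    -- step (b)+(c)+(d): bound the (x',s) sums
    set D : ℝ := ∑ m : Fin d → ZMod n, (Complex.abs (Bf E m))^k with hD
    have hDnonneg : 0 ≤ D := Finset.sum_nonneg fun m _ => by positivity
    have hc : ∀ s : ZMod n, ∑ a : Fin d → ZMod n,
        (Complex.abs (Bf E (fun i => s * a i)))^k ≤ ((Nat.gcd s.val n : ℝ))^d * D := by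
      intro s
      rw [Finset.sum_comp (fun m : Fin d → ZMod n => (Complex.abs (Bf E m))^k)
        (fun a : Fin d → ZMod n => (fun i => s * a i))]
      calc ∑ b ∈ Finset.image (fun a : Fin d → ZMod n => (fun i => s * a i)) univ,
            (univ.filter fun a : Fin d → ZMod n => (fun i => s * a i) = b).card
              • (Complex.abs (Bf E b))^k
          ≤ ∑ b ∈ Finset.image (fun a : Fin d → ZMod n => (fun i => s * a i)) univ,
            ((Nat.gcd s.val n : ℝ))^d * (Complex.abs (Bf E b))^k := by
            refine Finset.sum_le_sum fun b _ => ?_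
            rw [nsmul_eq_mul]
            apply mul_le_mul_of_nonneg_right _ (by positivity)
            calc ((univ.filter fun a : Fin d → ZMod n => (fun i => s * a i) = b).card : ℝ)
                ≤ (((Nat.gcd s.val n)^d : ℕ) : ℝ) := by exact_mod_cast fiber_card_le s b
              _ = ((Nat.gcd s.val n : ℝ))^d := by push_cast; ring
        _ ≤ ∑ b : Fin d → ZMod n, ((Nat.gcd s.val n : ℝ))^d * (Complex.abs (Bf E b))^k := by
            apply Finset.sum_le_sum_of_subset_of_nonneg (Finset.subset_univ _)
            intro b _ _
            positivity
        _ = ((Nat.gcd s.val n : ℝ))^d * D := by rw [← Finset.mul_sum]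
    have hb : ∀ x : Fin d → ZMod n, ∑ x' ∈ E, ∑ s ∈ univ.erase (0 : ZMod n),
        (Complex.abs (Bf E (fun i => s * (x i - x' i))))^k
        ≤ (n.divisors.card : ℝ) * (n:ℝ)^d / (n.minFac : ℝ)^(d-1)
            * ((E.card : ℝ)^(k-2) * ((n:ℝ)^d * (E.card : ℝ))) := by
      intro x
      have hinj : Set.InjOn (fun x' : Fin d → ZMod n => x - x') E := by
        intro p _ q _ hpq
        exact sub_right_injective hpq
      calc ∑ x' ∈ E, ∑ s ∈ univ.erase (0 : ZMod n),
            (Complex.abs (Bf E (fun i => s * (x i - x' i))))^k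
          = ∑ a ∈ E.image (fun x' => x - x'), ∑ s ∈ univ.erase (0 : ZMod n),
            (Complex.abs (Bf E (fun i => s * (a i))))^k := by
            rw [Finset.sum_image hinj]
            refine Finset.sum_congr rfl fun x' _ => ?_
            refine Finset.sum_congr rfl fun s _ => ?_
            congr 1
        _ ≤ ∑ a : Fin d → ZMod n, ∑ s ∈ univ.erase (0 : ZMod n),
            (Complex.abs (Bf E (fun i => s * (a i))))^k := by
            apply Finset.sum_le_sum_of_subset_of_nonneg (Finset.subset_univ _)
            intro a _ _
            exact Finset.sum_nonneg fun s _ => by positivity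
        _ = ∑ s ∈ univ.erase (0 : ZMod n), ∑ a : Fin d → ZMod n,
            (Complex.abs (Bf E (fun i => s * (a i))))^k := Finset.sum_comm
        _ ≤ ∑ s ∈ univ.erase (0 : ZMod n), ((Nat.gcd s.val n : ℝ))^d * D :=
            Finset.sum_le_sum fun s _ => hc s
        _ = (∑ s ∈ univ.erase (0 : ZMod n), ((Nat.gcd s.val n : ℝ))^d) * D := by
            rw [Finset.sum_mul]
        _ ≤ (n.divisors.card : ℝ) * (n:ℝ)^d / (n.minFac : ℝ)^(d-1) * D := by
            apply mul_le_mul_of_nonneg_right (sum_gcd_pow_le hn3 hd) hDnonneg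
        _ ≤ (n.divisors.card : ℝ) * (n:ℝ)^d / (n.minFac : ℝ)^(d-1)
              * ((E.card : ℝ)^(k-2) * ((n:ℝ)^d * (E.card : ℝ))) := by
            apply mul_le_mul_of_nonneg_left (sum_Bf_pow_le hk E) (by positivity)
    -- combine (a),(b)
    calc ∑ x ∈ E, ∑ x' ∈ E, (r x x')^k
        ≤ ∑ x ∈ E, ∑ x' ∈ E, (n:ℝ)⁻¹ * ∑ s ∈ univ.erase (0 : ZMod n),
            (Complex.abs (Bf E (fun i => s * (x i - x' i))))^k :=
          Finset.sum_le_sum fun x _ => Finset.sum_le_sum fun x' _ => ha x x'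
      _ = (n:ℝ)⁻¹ * ∑ x ∈ E, ∑ x' ∈ E, ∑ s ∈ univ.erase (0 : ZMod n),
            (Complex.abs (Bf E (fun i => s * (x i - x' i))))^k := by
          rw [Finset.mul_sum]
          refine Finset.sum_congr rfl fun x _ => ?_
          rw [Finset.mul_sum]
      _ ≤ (n:ℝ)⁻¹ * ∑ _x ∈ E, ((n.divisors.card : ℝ) * (n:ℝ)^d / (n.minFac : ℝ)^(d-1)
            * ((E.card : ℝ)^(k-2) * ((n:ℝ)^d * (E.card : ℝ)))) := by
          apply mul_le_mul_of_nonneg_left _ (by positivity)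
          exact Finset.sum_le_sum fun x _ => hb x
      _ = (n:ℝ)⁻¹ * ((E.card : ℝ) * ((n.divisors.card : ℝ) * (n:ℝ)^d / (n.minFac : ℝ)^(d-1)
            * ((E.card : ℝ)^(k-2) * ((n:ℝ)^d * (E.card : ℝ))))) := by
          rw [Finset.sum_const, nsmul_eq_mul]
      _ = (n.divisors.card : ℝ) * (n:ℝ)^(2*d-1) * (E.card : ℝ)^k / (n.minFac : ℝ)^(d-1) := by
          have hpow : (n:ℝ)^d * (n:ℝ)^d = (n:ℝ)^(2*d-1) * n := by
            rw [← pow_add, ← pow_succ]; congr 1; omega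
          have hEpow : (E.card : ℝ) * ((E.card : ℝ)^(k-2) * (E.card : ℝ)) = (E.card : ℝ)^k := by
            have h' : (E.card : ℝ) * ((E.card : ℝ)^(k-2) * (E.card : ℝ))
                = (E.card : ℝ)^(1+(k-2)+1) := by
              rw [pow_add, pow_add, pow_one]; ring
            rw [h']; congr 1; omega
          rw [show (n:ℝ)⁻¹ * ((E.card : ℝ) * ((n.divisors.card : ℝ) * (n:ℝ)^d
              / (n.minFac : ℝ)^(d-1) * ((E.card : ℝ)^(k-2) * ((n:ℝ)^d * (E.card : ℝ)))))
            = ((n:ℝ)^d * (n:ℝ)^d) * (n:ℝ)⁻¹ * (n.divisors.card : ℝ)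
              * ((E.card : ℝ) * ((E.card : ℝ)^(k-2) * (E.card : ℝ)))
                / (n.minFac : ℝ)^(d-1) by ring]
          rw [hpow, hEpow, mul_assoc ((n:ℝ)^(2*d-1)) (n:ℝ) (n:ℝ)⁻¹,
            mul_inv_cancel₀ hn0.ne', mul_one]
          ring
  -- final combination
  calc ∑ x ∈ E, ∑ x' ∈ E, ((E.filter fun y => nrm (x - y) = nrm (x' - y)).card : ℝ)^k
      ≤ ∑ x ∈ E, ∑ x' ∈ E, 2^k * (((E.card : ℝ)/n)^k + (r x x')^k) :=
        Finset.sum_le_sum fun x _ => Finset.sum_le_sum fun x' _ => hNk x x'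
    _ = 2^k * ((E.card:ℝ)^2 * ((E.card : ℝ)/n)^k + ∑ x ∈ E, ∑ x' ∈ E, (r x x')^k) := by
        simp_rw [mul_add]
        rw [Finset.sum_congr rfl (fun x (_ : x ∈ E) => Finset.sum_add_distrib),
          Finset.sum_add_distrib]
        congr 1
        · simp only [Finset.sum_const, nsmul_eq_mul]
          ring
        · rw [Finset.mul_sum]
          exact Finset.sum_congr rfl fun x _ => (Finset.mul_sum _ _ _).symm
    _ ≤ 2^k * ((E.card : ℝ)^(k+2) / (n:ℝ)^k
        + (n.divisors.card : ℝ) * (n:ℝ)^(2*d-1) * (E.card : ℝ)^k / (n.minFac : ℝ)^(d-1)) := by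
        apply mul_le_mul_of_nonneg_left _ (by positivity)
        apply add_le_add _ hrk
        rw [div_pow]
        rw [show (E.card:ℝ)^(k+2) = (E.card:ℝ)^2 * (E.card:ℝ)^k by rw [← pow_add]; congr 1; omega]
        rw [mul_div_assoc]


lemma lhs_eq {d k : ℕ} (E : Finset (Fin d → ZMod n)) :
    ∑ y ∈ Fintype.piFinset (fun _ : Fin k => E), ∑ t : Fin k → ZMod n,
      ((E.filter (fun x => ∀ i, nrm (x - y i) = t i)).card : ℝ) ^ 2
    = ∑ x ∈ E, ∑ x' ∈ E,
        ((E.filter fun y => nrm (x - y) = nrm (x' - y)).card : ℝ) ^ k := by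
  classical
  have step1 : ∀ (y : Fin k → (Fin d → ZMod n)) (t : Fin k → ZMod n),
      ((E.filter (fun x => ∀ i, nrm (x - y i) = t i)).card : ℝ) ^ 2
      = ∑ x ∈ E, ∑ x' ∈ E,
          (if (∀ i, nrm (x - y i) = t i) then (1:ℝ) else 0)
          * (if (∀ i, nrm (x' - y i) = t i) then (1:ℝ) else 0) := by
    intro y t
    rw [← Finset.sum_boole (fun x => ∀ i, nrm (x - y i) = t i) E, pow_two,
      Finset.sum_mul_sum]
  calc ∑ y ∈ Fintype.piFinset (fun _ : Fin k => E), ∑ t : Fin k → ZMod n,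
        ((E.filter (fun x => ∀ i, nrm (x - y i) = t i)).card : ℝ) ^ 2
      = ∑ y ∈ Fintype.piFinset (fun _ : Fin k => E), ∑ x ∈ E, ∑ x' ∈ E,
          (if (∀ i, nrm (x - y i) = nrm (x' - y i)) then (1:ℝ) else 0) := by
        refine Finset.sum_congr rfl fun y _ => ?_
        rw [Finset.sum_congr rfl (fun t _ => step1 y t), Finset.sum_comm]
        refine Finset.sum_congr rfl fun x _ => ?_
        rw [Finset.sum_comm]
        refine Finset.sum_congr rfl fun x' _ => ?_
        have inner : ∀ t : Fin k → ZMod n,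
            (if (∀ i, nrm (x - y i) = t i) then (1:ℝ) else 0)
            * (if (∀ i, nrm (x' - y i) = t i) then (1:ℝ) else 0)
            = if ((fun i => nrm (x - y i)) = t) then
                (if (fun i => nrm (x' - y i)) = t then (1:ℝ) else 0) else 0 := by
          intro t
          rw [boole_mul]
          congr 1
          · exact propext (funext_iff.symm)
          · congr 1
            exact propext (funext_iff.symm)
        rw [Finset.sum_congr rfl (fun t _ => inner t), Finset.sum_ite_eq univ _ _, if_pos (Finset.mem_univ _)]
        congr 1
        exact propext (funext_iff.trans (forall_congr' fun i => eq_comm))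
    _ = ∑ x ∈ E, ∑ x' ∈ E,
        ((E.filter fun y => nrm (x - y) = nrm (x' - y)).card : ℝ) ^ k := by
      rw [Finset.sum_comm]
      refine Finset.sum_congr rfl fun x _ => ?_
      rw [Finset.sum_comm]
      refine Finset.sum_congr rfl fun x' _ => ?_
      have hprod : ∀ y : Fin k → (Fin d → ZMod n),
          (if (∀ i, nrm (x - y i) = nrm (x' - y i)) then (1:ℝ) else 0)
          = ∏ i : Fin k, (if nrm (x - y i) = nrm (x' - y i) then (1:ℝ) else 0) := by
        intro y
        rw [Finset.prod_boole]
        congr 1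
        simp
      rw [Finset.sum_congr rfl (fun y _ => hprod y),
        ← Finset.prod_univ_sum (fun _ : Fin k => E)
          (fun _ z => if nrm (x - z) = nrm (x' - z) then (1:ℝ) else 0)]
      rw [Finset.prod_congr rfl (fun i _ => Finset.sum_boole _ E)]
      rw [Finset.prod_const]
      congr 1
      simp



theorem stmt11 (k : ℕ) (hk : 1 ≤ k) :
    ∃ C > (0 : ℝ), ∀ (n d : ℕ) [NeZero n], Odd n → 3 ≤ n → 1 ≤ d →
      ∀ E : Finset (Fin d → ZMod n),
      ∑ y ∈ Fintype.piFinset (fun _ : Fin k => E), ∑ t : Fin k → ZMod n,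
        ((E.filter (fun x => ∀ i, nrm (x - y i) = t i)).card : ℝ) ^ 2
        ≤ C * ((E.card : ℝ) ^ (k + 2) / (n : ℝ) ^ k +
          (n.divisors.card : ℝ) * (n : ℝ) ^ (2 * d - 1) * (E.card : ℝ) ^ k /
            (n.minFac : ℝ) ^ (d - 1)) := by
  refine ⟨2^k, by positivity, ?_⟩
  intro n d _inst hodd hn3 hd E
  rw [lhs_eq E]
  have hn0 : (0:ℝ) < n := by exact_mod_cast (by omega : 0 < n)
  have hγ0 : (0:ℝ) < (n.minFac : ℝ) := by exact_mod_cast Nat.minFac_pos n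
  rcases Nat.lt_or_ge k 2 with hk2 | hk2
  · -- k = 1
    have hk1 : k = 1 := by omega
    subst hk1
    have h := k1_bound hodd hn3 hd E
    have hT1 : (0:ℝ) ≤ (E.card : ℝ) ^ (1 + 2) / (n : ℝ) ^ 1 := by positivity
    have hT2 : (0:ℝ) ≤ (n.divisors.card : ℝ) * (n : ℝ) ^ (2 * d - 1) * (E.card : ℝ) ^ 1 /
        (n.minFac : ℝ) ^ (d - 1) := by positivity
    calc ∑ x ∈ E, ∑ x' ∈ E, ((E.filter fun y => nrm (x - y) = nrm (x' - y)).card : ℝ) ^ 1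
        = ∑ x ∈ E, ∑ x' ∈ E, ((E.filter fun y => nrm (x - y) = nrm (x' - y)).card : ℝ) := by
          simp
      _ ≤ (E.card : ℝ)^3 / n
            + (n.divisors.card : ℝ) * (n:ℝ)^(2*d-1) * (E.card : ℝ) / (n.minFac : ℝ)^(d-1) := h
      _ = (E.card : ℝ) ^ (1 + 2) / (n : ℝ) ^ 1 + (n.divisors.card : ℝ) * (n : ℝ) ^ (2 * d - 1)
            * (E.card : ℝ) ^ 1 / (n.minFac : ℝ) ^ (d - 1) := by norm_num
      _ ≤ 2^1 * ((E.card : ℝ) ^ (1 + 2) / (n : ℝ) ^ 1 + (n.divisors.card : ℝ)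
            * (n : ℝ) ^ (2 * d - 1) * (E.card : ℝ) ^ 1 / (n.minFac : ℝ) ^ (d - 1)) := by
          nlinarith [hT1, hT2]
  · -- k ≥ 2
    exact k2_bound hodd hn3 hd hk2 E

end main
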